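/- Suppose {𝐮ₙ} ⊂ 𝒩_V is a minimizing sequence for I_V at level c_V with dichotomy splitting 𝐮ₙ = 𝐯ₙ + 𝐰ₙ satisfying G_V(𝐮ₙ) = G_V(𝐯ₙ) + G_V(𝐰ₙ) + o(1) and J(𝐮ₙ) = J(𝐯ₙ) + J(𝐰ₙ) + o(1). If along a subsequence G_V(𝐯ₙ) ≤ 0, and if lim inf J(𝐯ₙ) ≥ c̃ for some 0 < c̃ < c_V, then the projections τₙ𝐯ₙ ∈ 𝒩_V satisfy τₙ ≤ 1, and consequently c_V ≤ J(τₙ𝐯ₙ) ≤ J(𝐯ₙ) → c̃ < c_V, a contradiction. Hence the case G_V(𝐯ₙ) ≤ 0 with dichotomy is impossible. -/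

import Mathlib

open MeasureTheory Real Filter Topology

noncomputable section

/-- `H¹(ℝᴺ)` membership (with the weak gradient realized as the classical gradient),
together with the `L^{p+1}` integrability granted by the Sobolev embedding. -/
def MemH1 {N : ℕ} (p : ℝ) (u : EuclideanSpace ℝ (Fin N) → ℝ) : Prop :=
  MemLp u 2 volume ∧ Differentiable ℝ u ∧
    MemLp (fun x => ‖gradient u x‖) 2 volume ∧
    MemLp u (ENNReal.ofReal (p + 1)) volume ∧ MemLp u 3 volume

/-- squared (unweighted) `H¹` norm. -/
def h1normSq {N : ℕ} (u : EuclideanSpace ℝ (Fin N) → ℝ) : ℝ :=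
  ∫ x, ‖gradient u x‖ ^ 2 + (u x) ^ 2

/-- The Nehari functional `G_V(u) = I_V'(u)[u]`. -/
def GV {N : ℕ} (V₁ V₂ V₃ : EuclideanSpace ℝ (Fin N) → ℝ) (γ p : ℝ)
    (u₁ u₂ u₃ : EuclideanSpace ℝ (Fin N) → ℝ) : ℝ :=
  ((∫ x, ‖gradient u₁ x‖ ^ 2 + V₁ x * (u₁ x) ^ 2) +
   (∫ x, ‖gradient u₂ x‖ ^ 2 + V₂ x * (u₂ x) ^ 2) +
   (∫ x, ‖gradient u₃ x‖ ^ 2 + V₃ x * (u₃ x) ^ 2)) -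
  ((∫ x, |u₁ x| ^ (p + 1)) + (∫ x, |u₂ x| ^ (p + 1)) + (∫ x, |u₃ x| ^ (p + 1))) -
  3 * γ * ∫ x, u₁ x * u₂ x * u₃ x

/-- Membership in the Nehari manifold `𝒩_V`. -/
def InNehariV {N : ℕ} (V₁ V₂ V₃ : EuclideanSpace ℝ (Fin N) → ℝ) (γ p : ℝ)
    (u₁ u₂ u₃ : EuclideanSpace ℝ (Fin N) → ℝ) : Prop :=
  MemH1 p u₁ ∧ MemH1 p u₂ ∧ MemH1 p u₃ ∧
  ¬(u₁ = 0 ∧ u₂ = 0 ∧ u₃ = 0) ∧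
  GV V₁ V₂ V₃ γ p u₁ u₂ u₃ = 0

/-- The action functional `I_V`. -/
def IV {N : ℕ} (V₁ V₂ V₃ : EuclideanSpace ℝ (Fin N) → ℝ) (γ p : ℝ)
    (u₁ u₂ u₃ : EuclideanSpace ℝ (Fin N) → ℝ) : ℝ :=
  (1 / 2 * (∫ x, ‖gradient u₁ x‖ ^ 2 + V₁ x * (u₁ x) ^ 2) - 1 / (p + 1) * ∫ x, |u₁ x| ^ (p + 1)) +
  (1 / 2 * (∫ x, ‖gradient u₂ x‖ ^ 2 + V₂ x * (u₂ x) ^ 2) - 1 / (p + 1) * ∫ x, |u₂ x| ^ (p + 1)) +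
  (1 / 2 * (∫ x, ‖gradient u₃ x‖ ^ 2 + V₃ x * (u₃ x) ^ 2) - 1 / (p + 1) * ∫ x, |u₃ x| ^ (p + 1)) -
  γ * ∫ x, u₁ x * u₂ x * u₃ x

/-- The auxiliary functional `J` (which coincides with `I_V` on `𝒩_V`). -/
def JV {N : ℕ} (V₁ V₂ V₃ : EuclideanSpace ℝ (Fin N) → ℝ) (p : ℝ)
    (u₁ u₂ u₃ : EuclideanSpace ℝ (Fin N) → ℝ) : ℝ :=
  (∫ x, 1 / 6 * (‖gradient u₁ x‖ ^ 2 + V₁ x * (u₁ x) ^ 2) +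
    (p - 2) / (3 * (p + 1)) * |u₁ x| ^ (p + 1)) +
  (∫ x, 1 / 6 * (‖gradient u₂ x‖ ^ 2 + V₂ x * (u₂ x) ^ 2) +
    (p - 2) / (3 * (p + 1)) * |u₂ x| ^ (p + 1)) +
  (∫ x, 1 / 6 * (‖gradient u₃ x‖ ^ 2 + V₃ x * (u₃ x) ^ 2) +
    (p - 2) / (3 * (p + 1)) * |u₃ x| ^ (p + 1))

/-- The Nehari ground-state level `c_V`. -/
def cLevel {N : ℕ} (V₁ V₂ V₃ : EuclideanSpace ℝ (Fin N) → ℝ) (γ p : ℝ) : ℝ :=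
  sInf {c : ℝ | ∃ u₁ u₂ u₃ : EuclideanSpace ℝ (Fin N) → ℝ,
    InNehariV V₁ V₂ V₃ γ p u₁ u₂ u₃ ∧ c = IV V₁ V₂ V₃ γ p u₁ u₂ u₃}

end

/-!
Comparing the Nehari identity for `τ𝐯` with `G_V(𝐯) ≤ 0` gives
`τ²(1 - τ) Q + τ³(1 - τ^(p-2)) P ≥ 0`, where `Q ≥ 0` is the quadratic part and `P > 0` the
`L^(p+1)` part of `𝐯`; this forces `τ ≤ 1`. Both parts of `J` are nonnegative and scale by `τ²`
and `τ^(p+1)`, so `c_V ≤ I_V(τ𝐯) = J(τ𝐯) ≤ J(𝐯)`, and an `n` with `0 < J(𝐯ₙ) < c_V` gives the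
contradiction.

The Bochner integral of a non-integrable function is `0`, so if some `V_j v_j²` is not
integrable, the quadratic form of `v_j` is `0` and `J(𝐯)` no longer splits into the two parts. That
junk value is then exploited instead: if `v_i` is a component with positive `J`, the triple with
`s v_i` in slot `i`, `ε v_j` in slot `j` and `0` in the remaining slot lies on `𝒩_V` for suitable
small `s, ε > 0` (the term `ε^(p+1) ∫|v_j|^(p+1)` balances `s² Q(v_i) - s^(p+1) ∫|v_i|^(p+1)`)
and has arbitrarily small action, so `c_V ≤ 0`.
-/

theorem le_one_of_nehari_scaling {p γ Q P C t : ℝ} (hp : 2 < p) (hQ : 0 ≤ Q) (hP : 0 < P)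
    (ht : 0 < t) (hG : Q - P - 3 * γ * C ≤ 0)
    (hGt : t ^ 2 * Q - t ^ (p + 1) * P - 3 * γ * (t ^ 3 * C) = 0) : t ≤ 1 := by
  by_contra! h1
  have hsplit : t ^ (p + 1) = t ^ 3 * t ^ (p - 2) := by
    rw [← Real.rpow_natCast, ← Real.rpow_add ht]
    ring_nf
  have hQ' : 0 ≤ (t ^ 3 - t ^ 2) * Q :=
    mul_nonneg (sub_nonneg.2 (pow_le_pow_right₀ h1.le (by norm_num))) hQ
  have hP' : 0 < t ^ 3 * ((t ^ (p - 2) - 1) * P) :=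
    mul_pos (by positivity) (mul_pos (sub_pos.2 (Real.one_lt_rpow h1 (by linarith))) hP)
  nlinarith [mul_nonpos_of_nonneg_of_nonpos (pow_pos ht 3).le hG]

theorem exists_balanced_scaling {p q b b' δ : ℝ} (hp : 1 < p) (hq : 0 < q) (hb' : 0 < b')
    (hδ : 0 < δ) :
    ∃ s > 0, ∃ ε > 0, s ^ 2 * q = s ^ (p + 1) * b + ε ^ (p + 1) * b' ∧ s ^ 2 * q < δ := by
  have h₁ : Tendsto (fun s : ℝ => s ^ (p - 1) * b) (𝓝[>] 0) (𝓝 0) := by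
    have := (Real.continuousAt_rpow_const 0 (p - 1) (Or.inr (by linarith))).tendsto.mul_const b
    simpa [Real.zero_rpow (by linarith : p - 1 ≠ 0)] using this.mono_left nhdsWithin_le_nhds
  have h₂ : Tendsto (fun s : ℝ => s ^ 2 * q) (𝓝[>] 0) (𝓝 0) := by
    simpa using (((continuous_pow 2).tendsto (0 : ℝ)).mul_const q).mono_left
      (nhdsWithin_le_nhds (s := Set.Ioi 0))
  obtain ⟨s, hs₁, hs₂, hs⟩ := ((h₁.eventually (gt_mem_nhds hq)).and
    ((h₂.eventually (gt_mem_nhds hδ)).and self_mem_nhdsWithin)).exists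
  have hs : 0 < s := hs
  have hlt : s ^ (p + 1) * b < s ^ 2 * q := by
    have : s ^ (p + 1) = s ^ 2 * s ^ (p - 1) := by
      rw [← Real.rpow_natCast, ← Real.rpow_add hs]
      ring_nf
    rw [this, mul_assoc]
    exact mul_lt_mul_of_pos_left hs₁ (by positivity)
  have hr : 0 < (s ^ 2 * q - s ^ (p + 1) * b) / b' := div_pos (by linarith) hb'
  refine ⟨s, hs, _, Real.rpow_pos_of_pos hr (p + 1)⁻¹, ?_, hs₂⟩
  rw [Real.rpow_inv_rpow hr.le (by linarith)]
  field_simp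
  ring

section TwoSlot

variable {i j : Fin 3} {s ε : ℝ}

def twoSlot (i j : Fin 3) (s ε : ℝ) : Fin 3 → ℝ :=
  fun k => if k = i then s else if k = j then ε else 0

theorem twoSlot_nonneg (hs : 0 ≤ s) (hε : 0 ≤ ε) (k : Fin 3) : 0 ≤ twoSlot i j s ε k := by
  unfold twoSlot
  split_ifs <;> [exact hs; exact hε; exact le_rfl]

theorem twoSlot_self : twoSlot i j s ε i = s := if_pos rfl

theorem prod_twoSlot (i j : Fin 3) (s ε : ℝ) : ∏ k, twoSlot i j s ε k = 0 := by
  obtain ⟨k, hki, hkj⟩ := Fin.exists_ne_and_ne_of_two_lt i j (by norm_num)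
  exact Finset.prod_eq_zero (Finset.mem_univ k) (by simp [twoSlot, hki, hkj])

theorem sum_twoSlot {M : Type*} [AddCommMonoid M] (hij : i ≠ j) (f : Fin 3 → ℝ → M)
    (hf : ∀ k, f k 0 = 0) : ∑ k, f k (twoSlot i j s ε k) = f i s + f j ε := by
  rw [Fintype.sum_eq_add i j hij fun k hk => by simp [twoSlot, hk.1, hk.2, hf]]
  simp [twoSlot, hij.symm]

end TwoSlot

noncomputable section Nehari

variable {N : ℕ}

local notation "E" => EuclideanSpace ℝ (Fin N)

def quadIntegrand (V u : E → ℝ) (x : E) : ℝ := ‖gradient u x‖ ^ 2 + V x * u x ^ 2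

def quadForm (V u : E → ℝ) : ℝ := ∫ x, quadIntegrand V u x

def powIntegral (p : ℝ) (u : E → ℝ) : ℝ := ∫ x, |u x| ^ (p + 1)

def cubicIntegral (u₁ u₂ u₃ : E → ℝ) : ℝ := ∫ x, u₁ x * u₂ x * u₃ x

def jComponent (V : E → ℝ) (p : ℝ) (u : E → ℝ) : ℝ :=
  ∫ x, 1 / 6 * quadIntegrand V u x + (p - 2) / (3 * (p + 1)) * |u x| ^ (p + 1)

theorem GV_eq (V₁ V₂ V₃ : E → ℝ) (γ p : ℝ) (u₁ u₂ u₃ : E → ℝ) :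
    GV V₁ V₂ V₃ γ p u₁ u₂ u₃ = (quadForm V₁ u₁ + quadForm V₂ u₂ + quadForm V₃ u₃) -
      (powIntegral p u₁ + powIntegral p u₂ + powIntegral p u₃) -
      3 * γ * cubicIntegral u₁ u₂ u₃ := rfl

theorem IV_eq (V₁ V₂ V₃ : E → ℝ) (γ p : ℝ) (u₁ u₂ u₃ : E → ℝ) :
    IV V₁ V₂ V₃ γ p u₁ u₂ u₃ =
      (1 / 2 * quadForm V₁ u₁ - 1 / (p + 1) * powIntegral p u₁) +
      (1 / 2 * quadForm V₂ u₂ - 1 / (p + 1) * powIntegral p u₂) +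
      (1 / 2 * quadForm V₃ u₃ - 1 / (p + 1) * powIntegral p u₃) -
      γ * cubicIntegral u₁ u₂ u₃ := rfl

theorem JV_eq (V₁ V₂ V₃ : E → ℝ) (p : ℝ) (u₁ u₂ u₃ : E → ℝ) :
    JV V₁ V₂ V₃ p u₁ u₂ u₃ = jComponent V₁ p u₁ + jComponent V₂ p u₂ + jComponent V₃ p u₃ :=
  rfl

theorem IV_eq_of_GV_eq_zero {V₁ V₂ V₃ : E → ℝ} {γ p : ℝ} {u₁ u₂ u₃ : E → ℝ} (hp : p + 1 ≠ 0)
    (h : GV V₁ V₂ V₃ γ p u₁ u₂ u₃ = 0) :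
    IV V₁ V₂ V₃ γ p u₁ u₂ u₃ = (quadForm V₁ u₁ + quadForm V₂ u₂ + quadForm V₃ u₃) / 6 +
      (p - 2) / (3 * (p + 1)) * (powIntegral p u₁ + powIntegral p u₂ + powIntegral p u₃) := by
  rw [GV_eq] at h
  rw [IV_eq]
  field_simp
  linear_combination (12 * (p + 1)) * h

theorem gradient_const_mul {u : E → ℝ} {x : E} (hu : DifferentiableAt ℝ u x) (c : ℝ) :
    gradient (fun y => c * u y) x = c • gradient u x := by
  simp only [gradient, fderiv_const_mul hu c, map_smul]

theorem quadIntegrand_zero (V : E → ℝ) : quadIntegrand V 0 = 0 := by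
  ext x
  simp [quadIntegrand, Pi.zero_def, gradient_fun_const]

theorem quadForm_zero (V : E → ℝ) : quadForm V 0 = 0 := by
  simp [quadForm, quadIntegrand_zero]

theorem quadForm_const_mul (V : E → ℝ) {u : E → ℝ} (hu : Differentiable ℝ u) (c : ℝ) :
    quadForm V (fun x => c * u x) = c ^ 2 * quadForm V u := by
  have h : ∀ x, quadIntegrand V (fun y => c * u y) x = c ^ 2 * quadIntegrand V u x := by
    intro x
    simp only [quadIntegrand, gradient_const_mul (hu x), norm_smul, Real.norm_eq_abs, mul_pow,
      sq_abs]
    ring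
  simp only [quadForm, h, integral_const_mul]

theorem powIntegral_const_mul (p : ℝ) (u : E → ℝ) {c : ℝ} (hc : 0 ≤ c) :
    powIntegral p (fun x => c * u x) = c ^ (p + 1) * powIntegral p u := by
  simp only [powIntegral, abs_mul, abs_of_nonneg hc, Real.mul_rpow hc (abs_nonneg _),
    integral_const_mul]

theorem cubicIntegral_const_mul (u₁ u₂ u₃ : E → ℝ) (a b c : ℝ) :
    cubicIntegral (fun x => a * u₁ x) (fun x => b * u₂ x) (fun x => c * u₃ x) =
      a * b * c * cubicIntegral u₁ u₂ u₃ := by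
  rw [cubicIntegral, cubicIntegral, ← integral_const_mul]
  congr 1 with x
  ring

theorem GV_const_mul (V₁ V₂ V₃ : E → ℝ) (γ p : ℝ) {u₁ u₂ u₃ : E → ℝ}
    (h₁ : Differentiable ℝ u₁) (h₂ : Differentiable ℝ u₂) (h₃ : Differentiable ℝ u₃)
    {a b c : ℝ} (ha : 0 ≤ a) (hb : 0 ≤ b) (hc : 0 ≤ c) :
    GV V₁ V₂ V₃ γ p (fun x => a * u₁ x) (fun x => b * u₂ x) (fun x => c * u₃ x) =
      (a ^ 2 * quadForm V₁ u₁ + b ^ 2 * quadForm V₂ u₂ + c ^ 2 * quadForm V₃ u₃) -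
      (a ^ (p + 1) * powIntegral p u₁ + b ^ (p + 1) * powIntegral p u₂ +
        c ^ (p + 1) * powIntegral p u₃) -
      3 * γ * (a * b * c * cubicIntegral u₁ u₂ u₃) := by
  rw [GV_eq, quadForm_const_mul V₁ h₁, quadForm_const_mul V₂ h₂, quadForm_const_mul V₃ h₃,
    powIntegral_const_mul p u₁ ha, powIntegral_const_mul p u₂ hb, powIntegral_const_mul p u₃ hc,
    cubicIntegral_const_mul]

theorem quadForm_nonneg {V : E → ℝ} (hV : ∀ x, 0 ≤ V x) (u : E → ℝ) : 0 ≤ quadForm V u :=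
  integral_nonneg fun x => add_nonneg (sq_nonneg _) (mul_nonneg (hV x) (sq_nonneg _))

theorem powIntegral_nonneg (p : ℝ) (u : E → ℝ) : 0 ≤ powIntegral p u :=
  integral_nonneg fun _ => Real.rpow_nonneg (abs_nonneg _) _

section MemH1

variable {p : ℝ} {u : EuclideanSpace ℝ (Fin N) → ℝ}

theorem MemH1.differentiable (hu : MemH1 p u) : Differentiable ℝ u := hu.2.1

theorem MemH1.integrable_sq (hu : MemH1 p u) : Integrable fun x => u x ^ 2 := hu.1.integrable_sq

theorem MemH1.integrable_abs_rpow (hu : MemH1 p u) (hp : -1 < p) :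
    Integrable fun x => |u x| ^ (p + 1) := by
  have h := hu.2.2.2.1.integrable_norm_rpow (ENNReal.ofReal_pos.2 (by linarith)).ne'
    ENNReal.ofReal_ne_top
  simpa [Real.norm_eq_abs, ENNReal.toReal_ofReal (by linarith : (0 : ℝ) ≤ p + 1)] using h

theorem MemH1.const_mul (hu : MemH1 p u) (c : ℝ) : MemH1 p (fun x => c * u x) := by
  obtain ⟨h2, hd, hg, hp1, h3⟩ := hu
  refine ⟨h2.const_mul c, hd.const_mul c, ?_, hp1.const_mul c, h3.const_mul c⟩
  simpa only [gradient_const_mul (hd _), norm_smul, Real.norm_eq_abs] using hg.const_mul |c|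

theorem powIntegral_pos (hp : -1 < p) (hu : MemH1 p u) (hne : u ≠ 0) : 0 < powIntegral p u := by
  obtain ⟨x₀, hx₀⟩ := Function.ne_iff.mp hne
  refine integral_pos_of_integrable_nonneg_nonzero (x := x₀) ?_ (hu.integrable_abs_rpow hp)
    (fun x => Real.rpow_nonneg (abs_nonneg _) _) (Real.rpow_pos_of_pos (abs_pos.2 hx₀) _).ne'
  exact (Real.continuous_rpow_const (by linarith)).comp hu.differentiable.continuous.abs

theorem quadForm_pos {V : EuclideanSpace ℝ (Fin N) → ℝ} {C : ℝ} (hC : 0 < C)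
    (hV : ∀ x, C ≤ V x) (hu : MemH1 p u) (hne : u ≠ 0) (hint : Integrable (quadIntegrand V u)) :
    0 < quadForm V u := by
  obtain ⟨x₀, hx₀⟩ := Function.ne_iff.mp hne
  have hsq : 0 < ∫ x, C * u x ^ 2 :=
    integral_pos_of_integrable_nonneg_nonzero (x := x₀)
      (continuous_const.mul (hu.differentiable.continuous.pow 2)) (hu.integrable_sq.const_mul C)
      (fun x => mul_nonneg hC.le (sq_nonneg _)) (mul_ne_zero hC.ne' (pow_ne_zero 2 hx₀))
  refine hsq.trans_le (integral_mono (hu.integrable_sq.const_mul C) hint fun x => ?_)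
  have := mul_le_mul_of_nonneg_right (hV x) (sq_nonneg (u x))
  simp only [quadIntegrand]
  linarith [sq_nonneg ‖gradient u x‖]

end MemH1

theorem jComponent_zero (V : E → ℝ) {p : ℝ} (hp : -1 < p) : jComponent V p 0 = 0 := by
  simp [jComponent, quadIntegrand_zero, Real.zero_rpow (by linarith : p + 1 ≠ 0)]

theorem jComponent_eq_of_integrable {V : E → ℝ} {p : ℝ} {u : E → ℝ}
    (hq : Integrable (quadIntegrand V u)) (hb : Integrable fun x => |u x| ^ (p + 1)) :
    jComponent V p u = quadForm V u / 6 + (p - 2) / (3 * (p + 1)) * powIntegral p u := by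
  rw [jComponent, integral_add (hq.const_mul _) (hb.const_mul _), integral_const_mul,
    integral_const_mul, quadForm, powIntegral]
  ring

theorem jComponent_eq_zero_of_not_integrable {V : E → ℝ} {p : ℝ} {u : E → ℝ}
    (hq : ¬Integrable (quadIntegrand V u)) (hb : Integrable fun x => |u x| ^ (p + 1)) :
    jComponent V p u = 0 := by
  refine integral_undef fun h => hq ?_
  refine ((h.sub (hb.const_mul ((p - 2) / (3 * (p + 1))))).const_mul 6).congr
    (Eventually.of_forall fun x => ?_)
  simp only [Pi.sub_apply]
  ring

theorem quadForm_pos_of_jComponent_pos {V : E → ℝ} {C p : ℝ} (hC : 0 < C) (hV : ∀ x, C ≤ V x)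
    (hp : -1 < p) {u : E → ℝ} (hu : MemH1 p u) (h : 0 < jComponent V p u) :
    0 < quadForm V u := by
  have hint : Integrable (quadIntegrand V u) := by
    by_contra hq
    exact h.ne' (jComponent_eq_zero_of_not_integrable hq (hu.integrable_abs_rpow hp))
  refine quadForm_pos hC hV hu ?_ hint
  rintro rfl
  exact h.ne' (jComponent_zero V hp)

section Triple

variable {V₁ V₂ V₃ : EuclideanSpace ℝ (Fin N) → ℝ} {γ p t : ℝ}
  {u₁ u₂ u₃ : EuclideanSpace ℝ (Fin N) → ℝ}

theorem IV_nonneg_of_InNehariV (hp : 2 ≤ p)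
    (hV₁ : ∀ x, 0 ≤ V₁ x) (hV₂ : ∀ x, 0 ≤ V₂ x) (hV₃ : ∀ x, 0 ≤ V₃ x)
    (hu : InNehariV V₁ V₂ V₃ γ p u₁ u₂ u₃) : 0 ≤ IV V₁ V₂ V₃ γ p u₁ u₂ u₃ := by
  rw [IV_eq_of_GV_eq_zero (by linarith) hu.2.2.2.2]
  have hk : 0 ≤ (p - 2) / (3 * (p + 1)) := div_nonneg (by linarith) (by linarith)
  have := quadForm_nonneg hV₁ u₁
  have := quadForm_nonneg hV₂ u₂
  have := quadForm_nonneg hV₃ u₃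
  have := powIntegral_nonneg p u₁
  have := powIntegral_nonneg p u₂
  have := powIntegral_nonneg p u₃
  positivity

theorem cLevel_le_IV (hp : 2 ≤ p)
    (hV₁ : ∀ x, 0 ≤ V₁ x) (hV₂ : ∀ x, 0 ≤ V₂ x) (hV₃ : ∀ x, 0 ≤ V₃ x)
    (hu : InNehariV V₁ V₂ V₃ γ p u₁ u₂ u₃) :
    cLevel V₁ V₂ V₃ γ p ≤ IV V₁ V₂ V₃ γ p u₁ u₂ u₃ := by
  refine csInf_le ⟨0, ?_⟩ ⟨u₁, u₂, u₃, hu, rfl⟩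
  rintro c ⟨v₁, v₂, v₃, hv, rfl⟩
  exact IV_nonneg_of_InNehariV hp hV₁ hV₂ hV₃ hv

theorem powIntegral_sum_pos_of_InNehariV (hp : -1 < p) (hu : InNehariV V₁ V₂ V₃ γ p u₁ u₂ u₃) :
    0 < powIntegral p u₁ + powIntegral p u₂ + powIntegral p u₃ := by
  obtain ⟨h₁, h₂, h₃, hne, -⟩ := hu
  have := powIntegral_nonneg p u₁
  have := powIntegral_nonneg p u₂
  have := powIntegral_nonneg p u₃
  by_cases e₁ : u₁ = 0
  · by_cases e₂ : u₂ = 0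
    · linarith [powIntegral_pos hp h₃ fun e₃ => hne ⟨e₁, e₂, e₃⟩]
    · linarith [powIntegral_pos hp h₂ e₂]
  · linarith [powIntegral_pos hp h₁ e₁]

theorem InNehariV_of_scaling {V v : Fin 3 → EuclideanSpace ℝ (Fin N) → ℝ} {a : Fin 3 → ℝ}
    (hv : ∀ k, MemH1 p (v k)) {i : Fin 3} (hai : a i ≠ 0) (hvi : v i ≠ 0)
    (hG : GV (V 0) (V 1) (V 2) γ p (fun x => a 0 * v 0 x) (fun x => a 1 * v 1 x)
      (fun x => a 2 * v 2 x) = 0) :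
    InNehariV (V 0) (V 1) (V 2) γ p (fun x => a 0 * v 0 x) (fun x => a 1 * v 1 x)
      (fun x => a 2 * v 2 x) := by
  refine ⟨(hv 0).const_mul _, (hv 1).const_mul _, (hv 2).const_mul _, ?_, hG⟩
  rintro ⟨h₀, h₁, h₂⟩
  have hall : ∀ k, (fun x => a k * v k x) = 0 := by
    intro k
    fin_cases k <;> assumption
  exact hvi (funext fun x => (mul_eq_zero.1 (congrFun (hall i) x)).resolve_left hai)

theorem exists_InNehariV_IV_lt {V v : Fin 3 → EuclideanSpace ℝ (Fin N) → ℝ} (hp : 1 < p)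
    (hv : ∀ k, MemH1 p (v k)) {i j : Fin 3} (hij : i ≠ j) (hQi : 0 < quadForm (V i) (v i))
    (hQj : quadForm (V j) (v j) = 0) (hvj : v j ≠ 0) {δ : ℝ} (hδ : 0 < δ) :
    ∃ u₁ u₂ u₃, InNehariV (V 0) (V 1) (V 2) γ p u₁ u₂ u₃ ∧
      IV (V 0) (V 1) (V 2) γ p u₁ u₂ u₃ < δ := by
  obtain ⟨s, hs, ε, hε, hbal, hsmall⟩ := exists_balanced_scaling (b := powIntegral p (v i)) hp
    hQi (powIntegral_pos (by linarith) (hv j) hvj) hδ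
  set a := twoSlot i j s ε
  have ha := twoSlot_nonneg (i := i) (j := j) hs.le hε.le
  have hprod : a 0 * a 1 * a 2 = 0 := (Fin.prod_univ_three a).symm.trans (prod_twoSlot i j s ε)
  have hQ : a 0 ^ 2 * quadForm (V 0) (v 0) + a 1 ^ 2 * quadForm (V 1) (v 1) +
      a 2 ^ 2 * quadForm (V 2) (v 2) = s ^ 2 * quadForm (V i) (v i) := by
    rw [← Fin.sum_univ_three (fun k => a k ^ 2 * quadForm (V k) (v k)),
      sum_twoSlot hij (fun k x => x ^ 2 * quadForm (V k) (v k)) (by simp), hQj, mul_zero,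
      add_zero]
  have hP : a 0 ^ (p + 1) * powIntegral p (v 0) + a 1 ^ (p + 1) * powIntegral p (v 1) +
      a 2 ^ (p + 1) * powIntegral p (v 2) =
        s ^ (p + 1) * powIntegral p (v i) + ε ^ (p + 1) * powIntegral p (v j) := by
    rw [← Fin.sum_univ_three (fun k => a k ^ (p + 1) * powIntegral p (v k)),
      sum_twoSlot hij (fun k x => x ^ (p + 1) * powIntegral p (v k))
        (by simp [Real.zero_rpow (by linarith : p + 1 ≠ 0)])]
  have hvi : v i ≠ 0 := by
    rintro h
    rw [h, quadForm_zero] at hQi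
    exact hQi.false
  have hmem := InNehariV_of_scaling (V := V) (a := a) (γ := γ) hv (i := i)
    (twoSlot_self.trans_ne hs.ne') hvi (by
      rw [GV_const_mul _ _ _ _ _ (hv 0).differentiable (hv 1).differentiable
        (hv 2).differentiable (ha 0) (ha 1) (ha 2), hQ, hP, hprod, hbal]
      ring)
  refine ⟨_, _, _, hmem, ?_⟩
  rw [IV_eq_of_GV_eq_zero (by linarith) hmem.2.2.2.2, quadForm_const_mul _ (hv 0).differentiable,
    quadForm_const_mul _ (hv 1).differentiable, quadForm_const_mul _ (hv 2).differentiable,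
    powIntegral_const_mul _ _ (ha 0), powIntegral_const_mul _ _ (ha 1),
    powIntegral_const_mul _ _ (ha 2), hQ, hP, ← hbal]
  have hk : (p - 2) / (3 * (p + 1)) < 1 / 3 := by
    rw [div_lt_iff₀ (by linarith)]
    linarith
  nlinarith [mul_pos hs (mul_pos hs hQi)]

theorem cLevel_nonpos_of_not_integrable {V v : Fin 3 → EuclideanSpace ℝ (Fin N) → ℝ} {C : ℝ}
    (hp : 2 ≤ p) (hC : 0 < C) (hV : ∀ k x, C ≤ V k x) (hv : ∀ k, MemH1 p (v k))
    (hJ : 0 < JV (V 0) (V 1) (V 2) p (v 0) (v 1) (v 2))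
    (hbad : ¬∀ k, Integrable (quadIntegrand (V k) (v k))) :
    cLevel (V 0) (V 1) (V 2) γ p ≤ 0 := by
  obtain ⟨i, hi⟩ : ∃ i, 0 < jComponent (V i) p (v i) := by
    by_contra! h
    rw [JV_eq] at hJ
    linarith [h 0, h 1, h 2]
  obtain ⟨j, hj⟩ := not_forall.mp hbad
  have hQi := quadForm_pos_of_jComponent_pos hC (hV i) (by linarith) (hv i) hi
  have hQj : quadForm (V j) (v j) = 0 := integral_undef hj
  have hij : i ≠ j := by
    rintro rfl
    linarith
  have hvj : v j ≠ 0 := by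
    rintro h
    rw [h, quadIntegrand_zero] at hj
    exact hj (integrable_zero _ _ _)
  have hV₀ k x : 0 ≤ V k x := hC.le.trans (hV k x)
  refine le_of_forall_pos_lt_add fun δ hδ => ?_
  obtain ⟨u₁, u₂, u₃, hmem, hlt⟩ :=
    exists_InNehariV_IV_lt (γ := γ) (by linarith) hv hij hQi hQj hvj hδ
  rw [zero_add]
  exact (cLevel_le_IV hp (hV₀ 0) (hV₀ 1) (hV₀ 2) hmem).trans_lt hlt

theorem le_one_of_smul_mem_nehari (hp : 2 < p)
    (hV₁ : ∀ x, 0 ≤ V₁ x) (hV₂ : ∀ x, 0 ≤ V₂ x) (hV₃ : ∀ x, 0 ≤ V₃ x)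
    (h₁ : Differentiable ℝ u₁) (h₂ : Differentiable ℝ u₂) (h₃ : Differentiable ℝ u₃)
    (ht : 0 < t) (hG : GV V₁ V₂ V₃ γ p u₁ u₂ u₃ ≤ 0)
    (hτ : InNehariV V₁ V₂ V₃ γ p (fun x => t * u₁ x) (fun x => t * u₂ x) (fun x => t * u₃ x)) :
    t ≤ 1 := by
  have hP := powIntegral_sum_pos_of_InNehariV (by linarith) hτ
  have hGt := hτ.2.2.2.2
  rw [powIntegral_const_mul _ _ ht.le, powIntegral_const_mul _ _ ht.le,
    powIntegral_const_mul _ _ ht.le, ← mul_add, ← mul_add] at hP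
  rw [GV_const_mul _ _ _ _ _ h₁ h₂ h₃ ht.le ht.le ht.le] at hGt
  rw [GV_eq] at hG
  refine le_one_of_nehari_scaling hp (add_nonneg (add_nonneg (quadForm_nonneg hV₁ u₁)
    (quadForm_nonneg hV₂ u₂)) (quadForm_nonneg hV₃ u₃))
    (pos_of_mul_pos_right hP (Real.rpow_nonneg ht.le _)) ht hG ?_
  linear_combination hGt

theorem IV_smul_le_JV (hp : 2 ≤ p)
    (hV₁ : ∀ x, 0 ≤ V₁ x) (hV₂ : ∀ x, 0 ≤ V₂ x) (hV₃ : ∀ x, 0 ≤ V₃ x)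
    (h₁ : MemH1 p u₁) (h₂ : MemH1 p u₂) (h₃ : MemH1 p u₃)
    (hq₁ : Integrable (quadIntegrand V₁ u₁)) (hq₂ : Integrable (quadIntegrand V₂ u₂))
    (hq₃ : Integrable (quadIntegrand V₃ u₃)) (ht : 0 ≤ t) (ht₁ : t ≤ 1)
    (hG : GV V₁ V₂ V₃ γ p (fun x => t * u₁ x) (fun x => t * u₂ x) (fun x => t * u₃ x) = 0) :
    IV V₁ V₂ V₃ γ p (fun x => t * u₁ x) (fun x => t * u₂ x) (fun x => t * u₃ x) ≤
      JV V₁ V₂ V₃ p u₁ u₂ u₃ := by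
  have hQ := add_nonneg (add_nonneg (quadForm_nonneg hV₁ u₁) (quadForm_nonneg hV₂ u₂))
    (quadForm_nonneg hV₃ u₃)
  have hP := add_nonneg (add_nonneg (powIntegral_nonneg p u₁) (powIntegral_nonneg p u₂))
    (powIntegral_nonneg p u₃)
  have hk : 0 ≤ (p - 2) / (3 * (p + 1)) := div_nonneg (by linarith) (by linarith)
  calc IV V₁ V₂ V₃ γ p (fun x => t * u₁ x) (fun x => t * u₂ x) (fun x => t * u₃ x)
      = t ^ 2 * (quadForm V₁ u₁ + quadForm V₂ u₂ + quadForm V₃ u₃) / 6 +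
        (p - 2) / (3 * (p + 1)) *
          (t ^ (p + 1) * (powIntegral p u₁ + powIntegral p u₂ + powIntegral p u₃)) := by
        rw [IV_eq_of_GV_eq_zero (by linarith) hG, quadForm_const_mul _ h₁.differentiable,
          quadForm_const_mul _ h₂.differentiable, quadForm_const_mul _ h₃.differentiable,
          powIntegral_const_mul _ _ ht, powIntegral_const_mul _ _ ht,
          powIntegral_const_mul _ _ ht]
        ring
    _ ≤ (quadForm V₁ u₁ + quadForm V₂ u₂ + quadForm V₃ u₃) / 6 +
        (p - 2) / (3 * (p + 1)) * (powIntegral p u₁ + powIntegral p u₂ + powIntegral p u₃) := by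
        gcongr
        · exact mul_le_of_le_one_left hQ (pow_le_one₀ ht ht₁)
        · exact mul_le_of_le_one_left hP (Real.rpow_le_one ht ht₁ (by linarith))
    _ = JV V₁ V₂ V₃ p u₁ u₂ u₃ := by
        rw [JV_eq, jComponent_eq_of_integrable hq₁ (h₁.integrable_abs_rpow (by linarith)),
          jComponent_eq_of_integrable hq₂ (h₂.integrable_abs_rpow (by linarith)),
          jComponent_eq_of_integrable hq₃ (h₃.integrable_abs_rpow (by linarith))]
        ring

theorem cLevel_le_JV_of_smul_mem_nehari (hp : 2 ≤ p) {C : ℝ} (hC : 0 < C)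
    (hV₁ : ∀ x, C ≤ V₁ x) (hV₂ : ∀ x, C ≤ V₂ x) (hV₃ : ∀ x, C ≤ V₃ x)
    (h₁ : MemH1 p u₁) (h₂ : MemH1 p u₂) (h₃ : MemH1 p u₃) (ht : 0 ≤ t) (ht₁ : t ≤ 1)
    (hτ : InNehariV V₁ V₂ V₃ γ p (fun x => t * u₁ x) (fun x => t * u₂ x) (fun x => t * u₃ x))
    (hJ : 0 < JV V₁ V₂ V₃ p u₁ u₂ u₃) :
    cLevel V₁ V₂ V₃ γ p ≤ JV V₁ V₂ V₃ p u₁ u₂ u₃ := by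
  have hV₁' x := hC.le.trans (hV₁ x)
  have hV₂' x := hC.le.trans (hV₂ x)
  have hV₃' x := hC.le.trans (hV₃ x)
  by_cases hint : Integrable (quadIntegrand V₁ u₁) ∧ Integrable (quadIntegrand V₂ u₂) ∧
      Integrable (quadIntegrand V₃ u₃)
  · exact (cLevel_le_IV hp hV₁' hV₂' hV₃' hτ).trans (IV_smul_le_JV hp hV₁' hV₂' hV₃' h₁ h₂ h₃
      hint.1 hint.2.1 hint.2.2 ht ht₁ hτ.2.2.2.2)
  · refine (cLevel_nonpos_of_not_integrable (V := ![V₁, V₂, V₃]) (v := ![u₁, u₂, u₃]) hp hC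
      (fun k => ?_) (fun k => ?_) hJ fun h => hint ⟨h 0, h 1, h 2⟩).trans hJ.le
    · fin_cases k <;> assumption
    · fin_cases k <;> assumption

end Triple

end Nehari

theorem stmt15_general (N : ℕ)
    (p : ℝ) (hp : 2 < p) (γ : ℝ)
    (V₁ V₂ V₃ : EuclideanSpace ℝ (Fin N) → ℝ)
    (hpos : ∃ C : ℝ, 0 < C ∧ ∀ x, C ≤ V₁ x ∧ C ≤ V₂ x ∧ C ≤ V₃ x)
    -- dichotomy splitting `𝐮ₙ = 𝐯ₙ + 𝐰ₙ`
    (Vv₁ Vv₂ Vv₃ : ℕ → EuclideanSpace ℝ (Fin N) → ℝ)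
    (hvH1 : ∀ n, MemH1 p (Vv₁ n) ∧ MemH1 p (Vv₂ n) ∧ MemH1 p (Vv₃ n))
    -- the bad case: `G_V(𝐯ₙ) ≤ 0` along the (sub)sequence and `J(𝐯ₙ) → c̃ ∈ (0, c_V)`
    (hGv : ∀ n, GV V₁ V₂ V₃ γ p (Vv₁ n) (Vv₂ n) (Vv₃ n) ≤ 0)
    (ct : ℝ) (hct0 : 0 < ct) (hctc : ct < cLevel V₁ V₂ V₃ γ p)
    (hJv : Tendsto (fun n => JV V₁ V₂ V₃ p (Vv₁ n) (Vv₂ n) (Vv₃ n)) atTop (𝓝 ct))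
    -- the Nehari projections `τₙ 𝐯ₙ ∈ 𝒩_V`
    (τ : ℕ → ℝ) (hτpos : ∀ n, 0 < τ n)
    (hτ : ∀ n, InNehariV V₁ V₂ V₃ γ p
      (fun x => τ n * Vv₁ n x) (fun x => τ n * Vv₂ n x) (fun x => τ n * Vv₃ n x)) :
    (∀ n, τ n ≤ 1) ∧ False := by
  obtain ⟨C, hC, hCV⟩ := hpos
  have hτ₁ : ∀ n, τ n ≤ 1 := fun n =>
    le_one_of_smul_mem_nehari hp (fun x => hC.le.trans (hCV x).1)
      (fun x => hC.le.trans (hCV x).2.1) (fun x => hC.le.trans (hCV x).2.2)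
      (hvH1 n).1.differentiable (hvH1 n).2.1.differentiable (hvH1 n).2.2.differentiable
      (hτpos n) (hGv n) (hτ n)
  obtain ⟨n, hJpos, hJlt⟩ := (hJv.eventually (Ioo_mem_nhds hct0 hctc)).exists
  refine ⟨hτ₁, hJlt.not_ge ?_⟩
  exact cLevel_le_JV_of_smul_mem_nehari hp.le hC (fun x => (hCV x).1) (fun x => (hCV x).2.1)
    (fun x => (hCV x).2.2) (hvH1 n).1 (hvH1 n).2.1 (hvH1 n).2.2 (hτpos n).le (hτ₁ n) (hτ n)
    hJpos

theorem stmt15 (N : ℕ) (hN : 1 ≤ N) (hN3 : N ≤ 3)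
    (p : ℝ) (hp : 2 < p) (hp' : N = 3 → p < 5) (γ : ℝ)
    (V₁ V₂ V₃ : EuclideanSpace ℝ (Fin N) → ℝ)
    (hmeas : Measurable V₁ ∧ Measurable V₂ ∧ Measurable V₃)
    (hpos : ∃ C : ℝ, 0 < C ∧ ∀ x, C ≤ V₁ x ∧ C ≤ V₂ x ∧ C ≤ V₃ x)
    -- `{𝐮ₙ} ⊂ 𝒩_V` minimizing for `I_V` at level `c_V`
    (U₁ U₂ U₃ : ℕ → EuclideanSpace ℝ (Fin N) → ℝ)
    (hU : ∀ n, InNehariV V₁ V₂ V₃ γ p (U₁ n) (U₂ n) (U₃ n))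
    (hUmin : Tendsto (fun n => IV V₁ V₂ V₃ γ p (U₁ n) (U₂ n) (U₃ n)) atTop
      (𝓝 (cLevel V₁ V₂ V₃ γ p)))
    -- dichotomy splitting `𝐮ₙ = 𝐯ₙ + 𝐰ₙ`
    (Vv₁ Vv₂ Vv₃ Ww₁ Ww₂ Ww₃ : ℕ → EuclideanSpace ℝ (Fin N) → ℝ)
    (hsplit : ∀ n x, U₁ n x = Vv₁ n x + Ww₁ n x ∧ U₂ n x = Vv₂ n x + Ww₂ n x ∧
      U₃ n x = Vv₃ n x + Ww₃ n x)
    (hvH1 : ∀ n, MemH1 p (Vv₁ n) ∧ MemH1 p (Vv₂ n) ∧ MemH1 p (Vv₃ n))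
    (hwH1 : ∀ n, MemH1 p (Ww₁ n) ∧ MemH1 p (Ww₂ n) ∧ MemH1 p (Ww₃ n))
    -- `G_V(𝐮ₙ) = G_V(𝐯ₙ) + G_V(𝐰ₙ) + o(1)` and `J(𝐮ₙ) = J(𝐯ₙ) + J(𝐰ₙ) + o(1)`
    (hGsplit : Tendsto (fun n => GV V₁ V₂ V₃ γ p (U₁ n) (U₂ n) (U₃ n) -
        GV V₁ V₂ V₃ γ p (Vv₁ n) (Vv₂ n) (Vv₃ n) -
        GV V₁ V₂ V₃ γ p (Ww₁ n) (Ww₂ n) (Ww₃ n)) atTop (𝓝 0))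
    (hJsplit : Tendsto (fun n => JV V₁ V₂ V₃ p (U₁ n) (U₂ n) (U₃ n) -
        JV V₁ V₂ V₃ p (Vv₁ n) (Vv₂ n) (Vv₃ n) -
        JV V₁ V₂ V₃ p (Ww₁ n) (Ww₂ n) (Ww₃ n)) atTop (𝓝 0))
    -- the bad case: `G_V(𝐯ₙ) ≤ 0` along the (sub)sequence and `J(𝐯ₙ) → c̃ ∈ (0, c_V)`
    (hGv : ∀ n, GV V₁ V₂ V₃ γ p (Vv₁ n) (Vv₂ n) (Vv₃ n) ≤ 0)
    (ct : ℝ) (hct0 : 0 < ct) (hctc : ct < cLevel V₁ V₂ V₃ γ p)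
    (hJv : Tendsto (fun n => JV V₁ V₂ V₃ p (Vv₁ n) (Vv₂ n) (Vv₃ n)) atTop (𝓝 ct))
    -- the Nehari projections `τₙ 𝐯ₙ ∈ 𝒩_V`
    (τ : ℕ → ℝ) (hτpos : ∀ n, 0 < τ n)
    (hτ : ∀ n, InNehariV V₁ V₂ V₃ γ p
      (fun x => τ n * Vv₁ n x) (fun x => τ n * Vv₂ n x) (fun x => τ n * Vv₃ n x)) :
    (∀ n, τ n ≤ 1) ∧ False :=
  stmt15_general N p hp γ V₁ V₂ V₃ hpos Vv₁ Vv₂ Vv₃ hvH1 hGv ct hct0 hctc hJv τ hτpos hτ
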